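/- Let F be a finite field and let F₀, F₁, F₂, F₃, F₄ ∈ MvPolynomial (Fin 3) F be homogeneous polynomials of degree 3 that are linearly independent over F. Then there exists a nonzero tuple (a₀,a₁,a₂,a₃,a₄) ∈ F⁵ such that the (nonzero) polynomial a₀•F₀ + a₁•F₁ + a₂•F₂ + a₃•F₃ + a₄•F₄ is not irreducible in MvPolynomial (Fin 3) F. -/

import Mathlib

/-!
Vanishing of the coefficients of the four cubic monomials in `x, y` alone imposes only four linear
conditions on five coefficients `a`, so some nonzero `a` satisfies them. The combination
`∑ aᵢ Fᵢ` is then divisible by `z`, and a cubic that is a multiple of `z` is reducible (or zero).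
-/

open MvPolynomial

namespace MvPolynomial

theorem X_dvd_of_coeff_eq_zero {σ R : Type*} [CommSemiring R] {p : MvPolynomial σ R} (i : σ)
    (h : ∀ d : σ →₀ ℕ, d i = 0 → coeff d p = 0) : X i ∣ p := by
  rw [p.as_sum]
  refine Finset.dvd_sum fun d hd => X_dvd_monomial.mpr (Or.inr fun hdi => ?_)
  exact mem_support_iff.mp hd (h d hdi)

theorem IsHomogeneous.not_irreducible_of_X_dvd {σ K : Type*} [Field K] {p : MvPolynomial σ K}
    {n : ℕ} (hp : p.IsHomogeneous n) (hn : n ≠ 1) {i : σ} (hdvd : X i ∣ p) : ¬Irreducible p := by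
  obtain ⟨q, rfl⟩ := hdvd
  intro hirr
  have hq : IsUnit q := (hirr.isUnit_or_isUnit rfl).resolve_left X_prime.not_isUnit
  obtain ⟨c, -, rfl⟩ := isUnit_iff_eq_C_of_isReduced.mp hq
  exact hn (hp.inj_right ((isHomogeneous_X K i).mul (isHomogeneous_C σ c)) hirr.ne_zero)

theorem exists_ne_zero_forall_coeff_sum_smul_eq_zero {σ ι K : Type*} [Field K] [Fintype ι]
    (G : ι → MvPolynomial σ K) (S : Finset (σ →₀ ℕ)) (hS : S.card < Fintype.card ι) :
    ∃ a : ι → K, a ≠ 0 ∧ ∀ d ∈ S, coeff d (∑ k, a k • G k) = 0 := by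
  have hdep : ¬LinearIndependent K fun k (d : S) => coeff d (G k) := fun h => by
    simpa using (h.fintype_card_le_finrank.trans_lt' hS)
  obtain ⟨a, hsum, k, hk⟩ := Fintype.not_linearIndependent_iff.mp hdep
  refine ⟨a, fun h => hk (congrFun h k), fun d hd => ?_⟩
  simpa [coeff_sum] using congrFun hsum ⟨d, hd⟩

end MvPolynomial

theorem Finsupp.mem_image_range_of_degree_eq {d : Fin 3 →₀ ℕ} {n : ℕ} (hd : d.degree = n)
    (h2 : d 2 = 0) :
    d ∈ (Finset.range (n + 1)).image fun k => Finsupp.single 0 k + Finsupp.single 1 (n - k) := by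
  have hsum : d 0 + d 1 = n := by
    simpa [Finsupp.degree_eq_sum, Fin.sum_univ_three, h2] using hd
  refine Finset.mem_image.mpr ⟨d 0, Finset.mem_range.mpr (by omega), ?_⟩
  ext j
  fin_cases j <;> simp [h2]
  omega

theorem exists_ne_zero_not_irreducible_sum_smul {K ι : Type*} [Field K] [Fintype ι] {n : ℕ}
    (hn : n ≠ 1) (hcard : n + 1 < Fintype.card ι) (G : ι → MvPolynomial (Fin 3) K)
    (hG : ∀ k, (G k).IsHomogeneous n) :
    ∃ a : ι → K, a ≠ 0 ∧ ¬Irreducible (∑ k, a k • G k) := by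
  obtain ⟨a, ha, hcoeff⟩ := exists_ne_zero_forall_coeff_sum_smul_eq_zero G
    ((Finset.range (n + 1)).image fun k => Finsupp.single 0 k + Finsupp.single 1 (n - k))
    (Finset.card_image_le.trans_lt (by simpa using hcard))
  have hhom : (∑ k, a k • G k).IsHomogeneous n :=
    Submodule.sum_mem (homogeneousSubmodule _ K n) fun k _ => Submodule.smul_mem _ _ (hG k)
  refine ⟨a, ha, hhom.not_irreducible_of_X_dvd hn (X_dvd_of_coeff_eq_zero 2 fun d hd2 => ?_)⟩
  by_contra hd
  have hdeg : d.degree = n := by rw [Finsupp.degree_eq_weight_one]; exact hhom hd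
  exact hd (hcoeff d (Finsupp.mem_image_range_of_degree_eq hdeg hd2))

theorem stmt_13 (F : Type*) [Field F]
    (F₀ F₁ F₂ F₃ F₄ : MvPolynomial (Fin 3) F)
    (h₀ : F₀.IsHomogeneous 3) (h₁ : F₁.IsHomogeneous 3) (h₂ : F₂.IsHomogeneous 3)
    (h₃ : F₃.IsHomogeneous 3) (h₄ : F₄.IsHomogeneous 3) :
    ∃ a : Fin 5 → F, a ≠ 0 ∧
      ¬ Irreducible (a 0 • F₀ + a 1 • F₁ + a 2 • F₂ + a 3 • F₃ + a 4 • F₄) := by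
  obtain ⟨a, ha, hred⟩ := exists_ne_zero_not_irreducible_sum_smul (n := 3) (by norm_num) (by simp)
    ![F₀, F₁, F₂, F₃, F₄] (by simp [Fin.forall_fin_succ, *])
  refine ⟨a, ha, ?_⟩
  simpa [Fin.sum_univ_five] using hred
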